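/- arXiv:2201.04482 — 6 statements merged into one kernel-verified Lean document; each statement's English description precedes it below -/
import Mathlib

section
/- If the function algebra F is invariant under all scalings T_λ (λ ∈ R), then the map φ sending Σ_k f_k U^k to Σ_k (T_{ħ₁/ħ₂} f_k) U^k is a *-algebra isomorphism from the shift algebra A^D_{ħ₁,q}(F) to A^D_{ħ₂,q}(F). -/
open scoped BigOperators

noncomputable section

abbrev V (D : ℕ) := Fin D → ℝ
abbrev L (D : ℕ) := Fin D → ℤ

def cz {D : ℕ} (n : L D) : V D := fun i => (n i : ℝ)

def Nr (D : ℕ) (x y : Fin D → ℝ) : ℝ :=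
  ∑ m : Fin D, ∑ n : Fin D, if (n : ℕ) < (m : ℕ) then x m * y n else 0

def Nz (D : ℕ) (k l : L D) : ℤ :=
  ∑ m : Fin D, ∑ n : Fin D, if (n : ℕ) < (m : ℕ) then k m * l n else 0

def Sh (D : ℕ) (hb : ℝ) (k : L D) (f : V D → ℂ) : V D → ℂ :=
  fun u => f (fun i => u i + hb * (k i : ℝ))

abbrev Alg (D : ℕ) := (L D) →₀ ((V D) → ℂ)

def amul (D : ℕ) (hb : ℝ) (q : ℂ) (a b : Alg D) : Alg D :=
  a.sum fun k f => b.sum fun l g =>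
    Finsupp.single (k + l) ((q ^ (Nz D k l)) • (f * Sh D hb k g))

def astar (D : ℕ) (hb : ℝ) (q : ℂ) (a : Alg D) : Alg D :=
  a.sum fun k f => Finsupp.single (-k) ((q ^ (Nz D (-k) (-k))) • Sh D hb (-k) (star f))

structure GoodF (D : ℕ) (hb : ℝ) (F : Set (V D → ℂ)) : Prop where
  zero_mem : (0 : V D → ℂ) ∈ F
  add_mem : ∀ f ∈ F, ∀ g ∈ F, f + g ∈ F
  mul_mem : ∀ f ∈ F, ∀ g ∈ F, f * g ∈ F
  smul_mem : ∀ (c : ℂ), ∀ f ∈ F, c • f ∈ F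
  star_mem : ∀ f ∈ F, star f ∈ F
  shift_mem : ∀ (k : L D), ∀ f ∈ F, Sh D hb k f ∈ F

def SeparatesPts (D : ℕ) (F : Set (V D → ℂ)) : Prop :=
  ∀ x y : V D, x ≠ y → ∃ f ∈ F, f x ≠ f y


/-- The scaling operator `(T_λ f)(u) = f(λu)`. -/
def Tmap (D : ℕ) (lam : ℝ) (f : V D → ℂ) : V D → ℂ := fun u => f (fun i => lam * u i)

/-- The map `Σ f_k U^k ↦ Σ (T_{ħ₁/ħ₂} f_k) U^k`. -/
def phiT (D : ℕ) (lam : ℝ) (a : Alg D) : Alg D :=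
  a.sum fun k f => Finsupp.single k (Tmap D lam f)

/-! The scaling `T_λ` is a coefficientwise *-homomorphism of the pointwise function algebra
that intertwines shifts, `T_λ ∘ S_{λħ}^k = S_ħ^k ∘ T_λ`. Since `φ` acts coefficientwise and the
twist `q^{N(k,l)}` does not involve `ħ`, `φ` carries the products and involution for `ħ₁ = λħ₂`
to those for `ħ₂`; it is inverted by `T_{λ⁻¹}`. -/

variable {D : ℕ}

theorem Tmap_one (f : V D → ℂ) : Tmap D 1 f = f := by
  funext u
  simp only [Tmap, one_mul]

theorem Tmap_Tmap (a b : ℝ) (f : V D → ℂ) : Tmap D a (Tmap D b f) = Tmap D (b * a) f := by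
  funext u
  simp only [Tmap, mul_assoc]

theorem Tmap_Sh (lam hb : ℝ) (k : L D) (f : V D → ℂ) :
    Tmap D lam (Sh D (lam * hb) k f) = Sh D hb k (Tmap D lam f) := by
  funext u
  simp only [Tmap, Sh, mul_add, mul_assoc]

theorem Tmap_zero (lam : ℝ) : Tmap D lam (0 : V D → ℂ) = 0 := rfl

theorem Tmap_mul (lam : ℝ) (f g : V D → ℂ) : Tmap D lam (f * g) = Tmap D lam f * Tmap D lam g :=
  rfl

theorem Tmap_smul (lam : ℝ) (c : ℂ) (f : V D → ℂ) : Tmap D lam (c • f) = c • Tmap D lam f := rfl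

theorem Tmap_star (lam : ℝ) (f : V D → ℂ) : Tmap D lam (star f) = star (Tmap D lam f) := rfl

theorem Sh_zero (hb : ℝ) (k : L D) : Sh D hb k (0 : V D → ℂ) = 0 := rfl

def TmapAddHom (D : ℕ) (lam : ℝ) : (V D → ℂ) →+ (V D → ℂ) where
  toFun := Tmap D lam
  map_zero' := Tmap_zero lam
  map_add' _ _ := rfl

theorem phiT_eq_mapRange (lam : ℝ) (a : Alg D) :
    phiT D lam a = Finsupp.mapRange (Tmap D lam) (Tmap_zero lam) a :=
  (Finsupp.sum_mapRange_index fun _ => Finsupp.single_zero _).symm.trans (Finsupp.sum_single _)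

theorem phiT_apply (lam : ℝ) (a : Alg D) (k : L D) : phiT D lam a k = Tmap D lam (a k) := by
  rw [phiT_eq_mapRange, Finsupp.mapRange_apply]

theorem phiT_single (lam : ℝ) (k : L D) (f : V D → ℂ) :
    phiT D lam (Finsupp.single k f) = Finsupp.single k (Tmap D lam f) := by
  rw [phiT_eq_mapRange, Finsupp.mapRange_single]

theorem phiT_finsuppSum {ι M : Type*} [Zero M] (lam : ℝ) (s : ι →₀ M) (g : ι → M → Alg D) :
    phiT D lam (s.sum g) = s.sum fun i m => phiT D lam (g i m) := by
  simp only [phiT_eq_mapRange]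
  exact map_finsuppSum (Finsupp.mapRange.addMonoidHom (TmapAddHom D lam)) s g

theorem phiT_phiT (a b : ℝ) (x : Alg D) : phiT D a (phiT D b x) = phiT D (b * a) x := by
  ext k : 1
  simp only [phiT_apply, Tmap_Tmap]

theorem phiT_one (x : Alg D) : phiT D 1 x = x := by
  ext k : 1
  rw [phiT_apply, Tmap_one]

theorem phiT_bijective {lam : ℝ} (hlam : lam ≠ 0) : Function.Bijective (phiT D lam) := by
  refine Function.bijective_iff_has_inverse.mpr ⟨phiT D lam⁻¹, fun x => ?_, fun x => ?_⟩ <;>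
    simp only [phiT_phiT, mul_inv_cancel₀ hlam, inv_mul_cancel₀ hlam, phiT_one]

theorem phiT_add (lam : ℝ) (a b : Alg D) : phiT D lam (a + b) = phiT D lam a + phiT D lam b := by
  ext k : 1
  simp only [phiT_apply, Finsupp.add_apply]
  rfl

theorem phiT_smul (lam : ℝ) (c : ℂ) (a : Alg D) : phiT D lam (c • a) = c • phiT D lam a := by
  ext k : 1
  simp only [phiT_apply, Finsupp.smul_apply]
  rfl

theorem phiT_amul (lam hb : ℝ) (q : ℂ) (a b : Alg D) :
    phiT D lam (amul D (lam * hb) q a b) = amul D hb q (phiT D lam a) (phiT D lam b) := by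
  simp only [amul, phiT_finsuppSum, phiT_single, phiT_eq_mapRange _ a, phiT_eq_mapRange _ b]
  rw [Finsupp.sum_mapRange_index fun k => by simp [Finsupp.sum]]
  refine Finsupp.sum_congr fun k _ => ?_
  rw [Finsupp.sum_mapRange_index fun l => by simp [Sh_zero]]
  refine Finsupp.sum_congr fun l _ => ?_
  rw [Tmap_smul, Tmap_mul, Tmap_Sh]

theorem phiT_astar (lam hb : ℝ) (q : ℂ) (a : Alg D) :
    phiT D lam (astar D (lam * hb) q a) = astar D hb q (phiT D lam a) := by
  simp only [astar, phiT_finsuppSum, phiT_single, phiT_eq_mapRange _ a]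
  rw [Finsupp.sum_mapRange_index fun k => by simp [Sh_zero]]
  refine Finsupp.sum_congr fun k _ => ?_
  rw [Tmap_smul, Tmap_Sh, Tmap_star]

theorem stmt3_general (D : ℕ) (hb₁ hb₂ : ℝ) (h1 : 0 < hb₁) (h2 : 0 < hb₂)
    (q : ℂ) (F : Set (V D → ℂ))
    (hT : ∀ (lam : ℝ), ∀ f ∈ F, Tmap D lam f ∈ F) :
    Function.Bijective (phiT D (hb₁ / hb₂)) ∧
    (∀ a : Alg D, (∀ k, a k ∈ F) → ∀ k, (phiT D (hb₁ / hb₂) a) k ∈ F) ∧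
    (∀ a b : Alg D, phiT D (hb₁ / hb₂) (a + b) = phiT D (hb₁ / hb₂) a + phiT D (hb₁ / hb₂) b) ∧
    (∀ (c : ℂ) (a : Alg D), phiT D (hb₁ / hb₂) (c • a) = c • phiT D (hb₁ / hb₂) a) ∧
    (∀ a b : Alg D,
      phiT D (hb₁ / hb₂) (amul D hb₁ q a b) =
        amul D hb₂ q (phiT D (hb₁ / hb₂) a) (phiT D (hb₁ / hb₂) b)) ∧
    (∀ a : Alg D,
      phiT D (hb₁ / hb₂) (astar D hb₁ q a) = astar D hb₂ q (phiT D (hb₁ / hb₂) a)) := by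
  have hb : hb₁ / hb₂ * hb₂ = hb₁ := div_mul_cancel₀ hb₁ h2.ne'
  refine ⟨phiT_bijective (div_ne_zero h1.ne' h2.ne'), fun a ha k => ?_, phiT_add _, phiT_smul _,
    fun a b => ?_, fun a => ?_⟩
  · rw [phiT_apply]
    exact hT _ _ (ha k)
  · simpa only [hb] using phiT_amul (hb₁ / hb₂) hb₂ q a b
  · simpa only [hb] using phiT_astar (hb₁ / hb₂) hb₂ q a

/-- If the function algebra `F` is invariant under all scalings `T_λ`, then
`φ : Σ f_k U^k ↦ Σ (T_{ħ₁/ħ₂} f_k) U^k` is a *-algebra isomorphism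
`A^D_{ħ₁,q}(F) ≃ A^D_{ħ₂,q}(F)`: it is a bijection preserving coefficients in `F`,
addition, multiplication and involution. -/
theorem stmt3 (D : ℕ) (hb₁ hb₂ : ℝ) (h1 : 0 < hb₁) (h2 : 0 < hb₂)
    (q : ℂ) (hq : ‖q‖ = 1) (F : Set (V D → ℂ))
    (hF1 : GoodF D hb₁ F) (hF2 : GoodF D hb₂ F)
    (hT : ∀ (lam : ℝ), ∀ f ∈ F, Tmap D lam f ∈ F) :
    Function.Bijective (phiT D (hb₁ / hb₂)) ∧
    (∀ a : Alg D, (∀ k, a k ∈ F) → ∀ k, (phiT D (hb₁ / hb₂) a) k ∈ F) ∧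
    (∀ a b : Alg D, phiT D (hb₁ / hb₂) (a + b) = phiT D (hb₁ / hb₂) a + phiT D (hb₁ / hb₂) b) ∧
    (∀ (c : ℂ) (a : Alg D), phiT D (hb₁ / hb₂) (c • a) = c • phiT D (hb₁ / hb₂) a) ∧
    (∀ a b : Alg D,
      phiT D (hb₁ / hb₂) (amul D hb₁ q a b) =
        amul D hb₂ q (phiT D (hb₁ / hb₂) a) (phiT D (hb₁ / hb₂) b)) ∧
    (∀ a : Alg D,
      phiT D (hb₁ / hb₂) (astar D hb₁ q a) = astar D hb₂ q (phiT D (hb₁ / hb₂) a)) :=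
  stmt3_general D hb₁ hb₂ h1 h2 q F hT
end
end

section
/- If the function algebra F satisfies e^{iλ·u} f ∈ F for all f ∈ F and λ ∈ R^D, then for q = e^{iħτ} the map φ_q(f_k U^k) = f_k e^{iτ N(u,k)} U^k is a *-algebra isomorphism A^D_{ħ,q}(F) ≅ A^D_{ħ,1}(F). -/
open scoped BigOperators

noncomputable section

/-- The phase function `u ↦ e^{iτ N(u,k)}`. -/
def phase (D : ℕ) (τ : ℝ) (k : L D) : V D → ℂ :=
  fun u => Complex.exp (Complex.I * (τ : ℂ) * ((Nr D u (cz k) : ℝ) : ℂ))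

/-- The map `φ_q : f_k U^k ↦ f_k e^{iτ N(u,k)} U^k`. -/
def phiQ (D : ℕ) (τ : ℝ) (a : Alg D) : Alg D :=
  a.sum fun k f => Finsupp.single k (f * phase D τ k)

/- ---------- auxiliary lemmas ---------- -/

lemma Nr_shift (D : ℕ) (u : V D) (c : ℝ) (x y : V D) :
    Nr D (fun i => u i + c * x i) y = Nr D u y + c * Nr D x y := by
  unfold Nr
  rw [Finset.mul_sum, ← Finset.sum_add_distrib]
  refine Finset.sum_congr rfl fun m _ => ?_
  rw [Finset.mul_sum, ← Finset.sum_add_distrib]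
  refine Finset.sum_congr rfl fun n _ => ?_
  split_ifs <;> ring

lemma Nr_cz (D : ℕ) (k l : L D) : Nr D (cz k) (cz l) = (Nz D k l : ℝ) := by
  unfold Nr Nz cz
  push_cast
  rfl

lemma Nr_add_right (D : ℕ) (u : V D) (x y : V D) :
    Nr D u (fun i => x i + y i) = Nr D u x + Nr D u y := by
  unfold Nr
  rw [← Finset.sum_add_distrib]
  refine Finset.sum_congr rfl fun m _ => ?_
  rw [← Finset.sum_add_distrib]
  refine Finset.sum_congr rfl fun n _ => ?_
  split_ifs <;> ring

lemma Nr_neg_right (D : ℕ) (u : V D) (x : V D) :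
    Nr D u (fun i => -(x i)) = - Nr D u x := by
  unfold Nr
  rw [← Finset.sum_neg_distrib]
  refine Finset.sum_congr rfl fun m _ => ?_
  rw [← Finset.sum_neg_distrib]
  refine Finset.sum_congr rfl fun n _ => ?_
  split_ifs <;> ring

lemma sum_mul_Nr (D : ℕ) (τ : ℝ) (k : L D) (u : V D) :
    ∑ m : Fin D, (τ * ∑ n : Fin D, if (n : ℕ) < (m : ℕ) then ((k n : ℤ) : ℝ) else 0) * u m
      = τ * Nr D u (cz k) := by
  unfold Nr cz
  rw [Finset.mul_sum]
  refine Finset.sum_congr rfl fun m _ => ?_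
  rw [mul_assoc, Finset.sum_mul, Finset.mul_sum, Finset.mul_sum]
  refine Finset.sum_congr rfl fun n _ => ?_
  split_ifs <;> ring

lemma phiQ_apply (D : ℕ) (τ : ℝ) (a : Alg D) (j : L D) :
    (phiQ D τ a) j = a j * phase D τ j := by
  unfold phiQ
  rw [Finsupp.sum_apply, Finsupp.sum]
  simp only [Finsupp.single_apply]
  refine (Finset.sum_eq_single j (fun k _ hk => if_neg hk) ?_).trans (by simp)
  intro hj
  simp [Finsupp.notMem_support_iff.mp hj]

lemma astar_apply (D : ℕ) (hb : ℝ) (q : ℂ) (a : Alg D) (j : L D) :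
    (astar D hb q a) j = (q ^ (Nz D j j)) • Sh D hb j (star (a (-j))) := by
  unfold astar
  rw [Finsupp.sum_apply, Finsupp.sum]
  simp only [Finsupp.single_apply]
  refine (Finset.sum_eq_single (-j)
    (fun k _ hk => if_neg fun h => hk (by rw [← h, neg_neg])) ?_).trans (by simp)
  intro hj
  have : a (-j) = 0 := Finsupp.notMem_support_iff.mp hj
  simp [this, Sh]
  exact Or.inr rfl

lemma amul_apply (D : ℕ) (hb : ℝ) (q : ℂ) (a b : Alg D) (j : L D) :
    (amul D hb q a b) j = ∑ k ∈ a.support, ∑ l ∈ b.support,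
      if k + l = j then (q ^ (Nz D k l)) • (a k * Sh D hb k (b l)) else 0 := by
  simp only [amul, Finsupp.sum_apply, Finsupp.sum, Finset.sum_apply', Finsupp.single_apply]

lemma phase_add (D : ℕ) (τ : ℝ) (k l : L D) (u : V D) :
    phase D τ (k + l) u = phase D τ k u * phase D τ l u := by
  unfold phase
  rw [← Complex.exp_add]
  congr 1
  have h1 : cz (k + l) = fun i => cz k i + cz l i := by
    funext i; simp [cz]
  rw [h1, Nr_add_right]
  push_cast
  ring

lemma phase_shift (D : ℕ) (hb τ : ℝ) (k l : L D) (u : V D) :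
    phase D τ l (fun i => u i + hb * ((k i : ℤ) : ℝ)) =
      phase D τ l u * Complex.exp (Complex.I * hb * τ * ((Nz D k l : ℤ) : ℂ)) := by
  unfold phase
  rw [← Complex.exp_add]
  congr 1
  have h : Nr D (fun i => u i + hb * cz k i) (cz l) = Nr D u (cz l) + hb * Nr D (cz k) (cz l) :=
    Nr_shift D u hb (cz k) (cz l)
  rw [show (fun i => u i + hb * ((k i : ℤ) : ℝ)) = (fun i => u i + hb * cz k i) from rfl, h,
    Nr_cz]
  push_cast
  ring

lemma phase_inv (D : ℕ) (τ : ℝ) (k : L D) (u : V D) :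
    phase D τ k u * phase D (-τ) k u = 1 := by
  unfold phase
  rw [← Complex.exp_add, ← Complex.exp_zero]
  congr 1
  push_cast
  ring

lemma q_pow (hb τ : ℝ) (q : ℂ) (hq : q = Complex.exp (Complex.I * (hb : ℂ) * (τ : ℂ)))
    (n : ℤ) : q ^ n = Complex.exp (Complex.I * hb * τ * (n : ℂ)) := by
  rw [hq, ← Complex.exp_int_mul]
  ring_nf

lemma phase_star (D : ℕ) (hb τ : ℝ) (j : L D) (u : V D) :
    (starRingEnd ℂ) (phase D τ (-j) (fun i => u i + hb * ((j i : ℤ) : ℝ))) =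
      phase D τ j u * Complex.exp (Complex.I * hb * τ * ((Nz D j j : ℤ) : ℂ)) := by
  unfold phase
  rw [← Complex.exp_conj, ← Complex.exp_add]
  congr 1
  rw [show (fun i => u i + hb * ((j i : ℤ) : ℝ)) = (fun i => u i + hb * cz j i) from rfl]
  rw [show cz (-j) = fun i => -(cz j i) from by funext i; simp [cz]]
  rw [Nr_neg_right, Nr_shift, Nr_cz]
  rw [map_mul, map_mul, Complex.conj_I, Complex.conj_ofReal, Complex.conj_ofReal]
  push_cast
  ring

/-- If `e^{iλ·u} f ∈ F` for all `f ∈ F`, `λ ∈ ℝ^D`, then for `q = e^{iħτ}` the map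
`φ_q(f_k U^k) = f_k e^{iτ N(u,k)} U^k` is a *-algebra isomorphism
`A^D_{ħ,q}(F) ≅ A^D_{ħ,1}(F)`. -/
theorem stmt4 (D : ℕ) (hb : ℝ) (hhb : 0 < hb) (τ : ℝ) (q : ℂ)
    (hq : q = Complex.exp (Complex.I * (hb : ℂ) * (τ : ℂ)))
    (F : Set (V D → ℂ)) (hF : GoodF D hb F)
    (hexp : ∀ (lam : V D), ∀ f ∈ F,
      (fun u => Complex.exp (Complex.I * ((∑ i, lam i * u i : ℝ) : ℂ)) * f u) ∈ F) :
    Function.Bijective (phiQ D τ) ∧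
    (∀ a : Alg D, (∀ k, a k ∈ F) → ∀ k, (phiQ D τ a) k ∈ F) ∧
    (∀ a b : Alg D, phiQ D τ (a + b) = phiQ D τ a + phiQ D τ b) ∧
    (∀ (c : ℂ) (a : Alg D), phiQ D τ (c • a) = c • phiQ D τ a) ∧
    (∀ a b : Alg D, phiQ D τ (amul D hb q a b) = amul D hb 1 (phiQ D τ a) (phiQ D τ b)) ∧
    (∀ a : Alg D, phiQ D τ (astar D hb q a) = astar D hb 1 (phiQ D τ a)) := by
  have hinv : ∀ (σ : ℝ) (a : Alg D), phiQ D (-σ) (phiQ D σ a) = a := by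
    intro σ a
    ext j u
    rw [phiQ_apply, phiQ_apply]
    simp only [Pi.mul_apply]
    rw [mul_assoc, phase_inv, mul_one]
  refine ⟨Function.bijective_iff_has_inverse.mpr ⟨phiQ D (-τ), fun a => hinv τ a, fun a => by
      have h := hinv (-τ) a; rwa [neg_neg] at h⟩, ?_, ?_, ?_, ?_, ?_⟩
  · -- membership
    intro a ha k
    rw [phiQ_apply]
    set lam : V D := fun m => τ * ∑ n : Fin D, if (n : ℕ) < (m : ℕ) then ((k n : ℤ) : ℝ) else 0
      with hlam
    have h := hexp lam (a k) (ha k)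
    have heq : a k * phase D τ k =
        (fun u => Complex.exp (Complex.I * ((∑ i, lam i * u i : ℝ) : ℂ)) * a k u) := by
      funext u
      simp only [Pi.mul_apply]
      rw [mul_comm]
      congr 1
      unfold phase
      congr 1
      rw [hlam]
      rw [sum_mul_Nr D τ k u]
      push_cast
      ring
    rw [heq]
    exact h
  · -- additive
    intro a b
    ext j
    simp only [phiQ_apply, Finsupp.add_apply, add_mul]
  · -- smul
    intro c a
    ext j
    simp only [phiQ_apply, Finsupp.smul_apply, smul_mul_assoc]
  · -- multiplicative
    intro a b
    have hsa : (phiQ D τ a).support ⊆ a.support := fun k hk =>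
      Finsupp.mem_support_iff.mpr fun h0 =>
        Finsupp.mem_support_iff.mp hk (by rw [phiQ_apply, h0, zero_mul])
    have hsb : (phiQ D τ b).support ⊆ b.support := fun k hk =>
      Finsupp.mem_support_iff.mpr fun h0 =>
        Finsupp.mem_support_iff.mp hk (by rw [phiQ_apply, h0, zero_mul])
    refine Finsupp.ext fun j => ?_
    have hRB : (amul D hb 1 (phiQ D τ a) (phiQ D τ b)) j
        = ∑ k ∈ a.support, ∑ l ∈ b.support,
            if k + l = j then ((phiQ D τ a) k * Sh D hb k ((phiQ D τ b) l)) else 0 := by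
      rw [amul_apply, Finset.sum_subset hsa]
      · refine Finset.sum_congr rfl fun k _ => ?_
        rw [Finset.sum_subset hsb]
        · refine Finset.sum_congr rfl fun l _ => ?_
          simp
        · intro l _ hlnot
          have h0 : (phiQ D τ b) l = 0 := Finsupp.notMem_support_iff.mp hlnot
          have hSh : Sh D hb k ((phiQ D τ b) l) = 0 := by rw [h0]; rfl
          simp [hSh]
      · intro k _ hknot
        have h0 : (phiQ D τ a) k = 0 := Finsupp.notMem_support_iff.mp hknot
        simp [h0]
    rw [hRB, phiQ_apply, amul_apply, Finset.sum_mul]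
    refine Finset.sum_congr rfl fun k _ => ?_
    rw [Finset.sum_mul]
    refine Finset.sum_congr rfl fun l _ => ?_
    rw [ite_mul, zero_mul]
    by_cases h : k + l = j
    · rw [if_pos h, if_pos h]
      subst h
      funext u
      simp only [Pi.mul_apply, Pi.smul_apply, smul_eq_mul, Sh, phiQ_apply]
      rw [phase_add, phase_shift, q_pow hb τ q hq]
      ring
    · rw [if_neg h, if_neg h]
  · -- star
    intro a
    refine Finsupp.ext fun j => ?_
    rw [phiQ_apply, astar_apply, astar_apply, one_zpow, one_smul]
    funext u
    simp only [Pi.mul_apply, Pi.smul_apply, smul_eq_mul, Sh, Pi.star_apply, phiQ_apply]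
    rw [star_mul', Complex.star_def, phase_star D hb τ j u, q_pow hb τ q hq]
    ring
end
end

section
/- If Λ₀E + Λ₁R = I and R(δ − δ') ∈ Z^D for δ, δ' ∈ R^D, then the map φ(ξ)(x,k) = ξ(x + E(δ'−δ), k + R(δ'−δ)) is an isomorphism of left A^D_{ħ,q}(F)-modules from S_ħ^δ(Λ₀,E,Λ₁,R) to S_ħ^{δ'}(Λ₀,E,Λ₁,R). -/
open scoped BigOperators

noncomputable section

def Phi (D : ℕ) (Λ₀ Λ₁ : Matrix (Fin D) (Fin D) ℝ) (δ : V D) (x : V D) (k : L D) : V D :=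
  Λ₀.mulVec x + Λ₁.mulVec (cz k) + δ

def cact (D : ℕ) (hb : ℝ) (q : ℂ) (Λ₀ Λ₁ E : Matrix (Fin D) (Fin D) ℝ)
    (R : Matrix (Fin D) (Fin D) ℤ) (δ : V D)
    (a : Alg D) (ξ : V D × L D → ℂ) : V D × L D → ℂ :=
  fun p => a.sum fun n f =>
    (q ^ (((Nr D (Phi D Λ₀ Λ₁ δ p.1 p.2) (cz n) : ℝ) : ℂ))) *
      f (hb • Phi D Λ₀ Λ₁ δ p.1 p.2) *
      ξ (p.1 + E.mulVec (cz n), p.2 + R.mulVec n)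

structure FInvariant (D : ℕ) (F : Set (V D → ℂ)) (S : Submodule ℂ (V D × L D → ℂ)) : Prop where
  fmul : ∀ f ∈ F, ∀ ξ ∈ S, (fun p : V D × L D => f p.1 * ξ p) ∈ S
  transl : ∀ (lam : V D) (r : L D), ∀ ξ ∈ S, (fun p : V D × L D => ξ (p.1 + lam, p.2 + r)) ∈ S
  phase : ∀ (lam : V D), ∀ ξ ∈ S,
    (fun p : V D × L D => Complex.exp (Complex.I * ((∑ i, lam i * p.1 i : ℝ) : ℂ)) * ξ p) ∈ S

/-- The translation map `φ(ξ)(x,k) = ξ(x + E(δ'−δ), k + z)` where `z = R(δ'−δ) ∈ ℤ^D`. -/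
def phiTr (D : ℕ) (E : Matrix (Fin D) (Fin D) ℝ) (w : V D) (z : L D)
    (ξ : V D × L D → ℂ) : V D × L D → ℂ :=
  fun p => ξ (p.1 + E.mulVec w, p.2 + z)

/-! The shift by `(E w, z)` with `R w = z` moves the base point `Φ(x, k, δ)` to `Φ(x, k, δ + w)`,
because `Λ₀ E + Λ₁ R = 1`; since `φ` is a translation commuting with every translation
`(x, k) ↦ (x + E n, k + R n)` of the action, it intertwines the actions for `δ` and `δ + w`,
and its inverse is the translation by `(-E w, -z)`. -/

theorem phiTr_isLinearMap (D : ℕ) (E : Matrix (Fin D) (Fin D) ℝ) (w : V D) (z : L D) :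
    IsLinearMap ℂ (phiTr D E w z) :=
  ⟨fun _ _ => rfl, fun _ _ => rfl⟩

theorem phiTr_phiTr (D : ℕ) (E : Matrix (Fin D) (Fin D) ℝ) (w w' : V D) (z z' : L D)
    (ξ : V D × L D → ℂ) :
    phiTr D E w z (phiTr D E w' z' ξ) = phiTr D E (w + w') (z + z') ξ := by
  funext p
  simp only [phiTr, Matrix.mulVec_add, add_assoc]

theorem phiTr_zero (D : ℕ) (E : Matrix (Fin D) (Fin D) ℝ) (ξ : V D × L D → ℂ) :
    phiTr D E 0 0 ξ = ξ := by
  funext p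
  simp [phiTr]

theorem phiTr_neg_phiTr (D : ℕ) (E : Matrix (Fin D) (Fin D) ℝ) (w : V D) (z : L D)
    (ξ : V D × L D → ℂ) : phiTr D E (-w) (-z) (phiTr D E w z ξ) = ξ := by
  rw [phiTr_phiTr, neg_add_cancel, neg_add_cancel, phiTr_zero]

theorem FInvariant.phiTr_mem {D : ℕ} {F : Set (V D → ℂ)} {S : Submodule ℂ (V D × L D → ℂ)}
    (hS : FInvariant D F S) (E : Matrix (Fin D) (Fin D) ℝ) (w : V D) (z : L D)
    {ξ : V D × L D → ℂ} (hξ : ξ ∈ S) : phiTr D E w z ξ ∈ S :=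
  hS.transl (E.mulVec w) z ξ hξ

theorem FInvariant.bijOn_phiTr {D : ℕ} {F : Set (V D → ℂ)} {S : Submodule ℂ (V D × L D → ℂ)}
    (hS : FInvariant D F S) (E : Matrix (Fin D) (Fin D) ℝ) (w : V D) (z : L D) :
    Set.BijOn (phiTr D E w z) (S : Set (V D × L D → ℂ)) (S : Set (V D × L D → ℂ)) := by
  refine Set.InvOn.bijOn (f' := phiTr D E (-w) (-z)) ⟨fun ξ _ => phiTr_neg_phiTr D E w z ξ,
    fun ξ _ => ?_⟩ (fun _ => hS.phiTr_mem E w z) (fun _ => hS.phiTr_mem E (-w) (-z))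
  simpa only [neg_neg] using phiTr_neg_phiTr D E (-w) (-z) ξ

theorem Phi_add_mulVec (D : ℕ) (Λ₀ Λ₁ E : Matrix (Fin D) (Fin D) ℝ)
    (R : Matrix (Fin D) (Fin D) ℤ) (hcomp : Λ₀ * E + Λ₁ * R.map (Int.cast : ℤ → ℝ) = 1)
    (δ w : V D) (z : L D) (hz : (R.map (Int.cast : ℤ → ℝ)).mulVec w = cz z) (x : V D) (k : L D) :
    Phi D Λ₀ Λ₁ δ (x + E.mulVec w) (k + z) = Phi D Λ₀ Λ₁ (w + δ) x k := by
  have hcz : cz (k + z) = cz k + cz z := by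
    funext i
    simp [cz]
  have hw : Λ₀.mulVec (E.mulVec w) + Λ₁.mulVec (cz z) = w := by
    rw [← hz, Matrix.mulVec_mulVec, Matrix.mulVec_mulVec, ← Matrix.add_mulVec, hcomp,
      Matrix.one_mulVec]
  simp only [Phi, hcz, Matrix.mulVec_add]
  conv_rhs => rw [← hw]
  abel

theorem phiTr_cact (D : ℕ) (hb : ℝ) (q : ℂ) (Λ₀ Λ₁ E : Matrix (Fin D) (Fin D) ℝ)
    (R : Matrix (Fin D) (Fin D) ℤ) (hcomp : Λ₀ * E + Λ₁ * R.map (Int.cast : ℤ → ℝ) = 1)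
    (δ w : V D) (z : L D) (hz : (R.map (Int.cast : ℤ → ℝ)).mulVec w = cz z)
    (a : Alg D) (ξ : V D × L D → ℂ) :
    phiTr D E w z (cact D hb q Λ₀ Λ₁ E R δ a ξ) =
      cact D hb q Λ₀ Λ₁ E R (w + δ) a (phiTr D E w z ξ) := by
  funext p
  simp only [phiTr, cact, Phi_add_mulVec D Λ₀ Λ₁ E R hcomp δ w z hz]
  refine Finsupp.sum_congr fun n _ => ?_
  rw [add_right_comm p.1, add_right_comm p.2]

theorem stmt6_general (D : ℕ) (hb : ℝ) (q : ℂ)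
    (F : Set (V D → ℂ))
    (Λ₀ Λ₁ E : Matrix (Fin D) (Fin D) ℝ) (R : Matrix (Fin D) (Fin D) ℤ) (δ δ' : V D)
    (hcomp : Λ₀ * E + Λ₁ * R.map (Int.cast : ℤ → ℝ) = 1)
    (z : L D) (hz : (R.map (Int.cast : ℤ → ℝ)).mulVec (δ' - δ) = cz z)
    (S : Submodule ℂ (V D × L D → ℂ)) (hS : FInvariant D F S) :
    IsLinearMap ℂ (phiTr D E (δ' - δ) z) ∧
    (∀ ξ ∈ S, phiTr D E (δ' - δ) z ξ ∈ S) ∧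
    Set.BijOn (phiTr D E (δ' - δ) z) (S : Set (V D × L D → ℂ)) (S : Set (V D × L D → ℂ)) ∧
    (∀ a : Alg D, (∀ k, a k ∈ F) → ∀ ξ : V D × L D → ℂ,
      phiTr D E (δ' - δ) z (cact D hb q Λ₀ Λ₁ E R δ a ξ) =
        cact D hb q Λ₀ Λ₁ E R δ' a (phiTr D E (δ' - δ) z ξ)) := by
  refine ⟨phiTr_isLinearMap D E _ z, fun _ => hS.phiTr_mem E _ z, hS.bijOn_phiTr E _ z,
    fun a _ ξ => ?_⟩
  simpa only [sub_add_cancel] using phiTr_cact D hb q Λ₀ Λ₁ E R hcomp δ (δ' - δ) z hz a ξ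

/-- Proposition 3.3: if `Λ₀E + Λ₁R = 1` and `R(δ−δ') ∈ ℤ^D`, then
`φ(ξ)(x,k) = ξ(x+E(δ'−δ), k+R(δ'−δ))` is an isomorphism of left `A^D_{ħ,q}(F)`-modules
`S_ħ^δ(Λ₀,E,Λ₁,R) ≃ S_ħ^{δ'}(Λ₀,E,Λ₁,R)`. -/
theorem stmt6 (D : ℕ) (hb : ℝ) (hhb : 0 < hb) (q : ℂ) (hq : ‖q‖ = 1)
    (F : Set (V D → ℂ)) (hF : GoodF D hb F)
    (Λ₀ Λ₁ E : Matrix (Fin D) (Fin D) ℝ) (R : Matrix (Fin D) (Fin D) ℤ) (δ δ' : V D)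
    (hcomp : Λ₀ * E + Λ₁ * R.map (Int.cast : ℤ → ℝ) = 1)
    (z : L D) (hz : (R.map (Int.cast : ℤ → ℝ)).mulVec (δ' - δ) = cz z)
    (S : Submodule ℂ (V D × L D → ℂ)) (hS : FInvariant D F S) :
    IsLinearMap ℂ (phiTr D E (δ' - δ) z) ∧
    (∀ ξ ∈ S, phiTr D E (δ' - δ) z ξ ∈ S) ∧
    Set.BijOn (phiTr D E (δ' - δ) z) (S : Set (V D × L D → ℂ)) (S : Set (V D × L D → ℂ)) ∧
    (∀ a : Alg D, (∀ k, a k ∈ F) → ∀ ξ : V D × L D → ℂ,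
      phiTr D E (δ' - δ) z (cact D hb q Λ₀ Λ₁ E R δ a ξ) =
        cact D hb q Λ₀ Λ₁ E R δ' a (phiTr D E (δ' - δ) z ξ)) :=
  stmt6_general D hb q F Λ₀ Λ₁ E R δ δ' hcomp z hz S hS
end
end

section
/- Suppose there exist A ∈ GL_D(R) and B ∈ GL_D(Z) with Λ₀A = Λ̃₀, AẼ = E, Λ₁B = Λ̃₁, BR̃ = R. Then Λ₀E = Λ̃₀Ẽ and Λ₁R = Λ̃₁R̃, and the map φ(ξ)(x,k) = ξ(Ax, Bk) is an isomorphism of left A^D_{ħ,q}(F)-modules S_ħ^δ(Λ₀,E,Λ₁,R) ≅ S_ħ^δ(Λ̃₀,Ẽ,Λ̃₁,R̃). -/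
open scoped BigOperators

noncomputable section

/-- The map `φ(ξ)(x,k) = ξ(Ax, Bk)`. -/
def phiAB (D : ℕ) (A : Matrix (Fin D) (Fin D) ℝ) (B : Matrix (Fin D) (Fin D) ℤ)
    (ξ : V D × L D → ℂ) : V D × L D → ℂ :=
  fun p => ξ (A.mulVec p.1, B.mulVec p.2)

/-! The substitution `(x, k) ↦ (A x, B k)` turns the affine map `Φ(x, k) = Λ₀ x + Λ₁ k + δ` into
the one with `Λ₀ A, Λ₁ B`, and turns the translations `(E n, R n)` into `(Ẽ n, R̃ n)` once
`E = A Ẽ` and `R = B R̃`; so it intertwines the two actions term by term. -/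

namespace ShiftModule

variable {D : ℕ}

lemma cz_mulVec (B : Matrix (Fin D) (Fin D) ℤ) (k : L D) :
    cz (B.mulVec k) = (B.map (Int.cast : ℤ → ℝ)).mulVec (cz k) :=
  funext (RingHom.map_mulVec (Int.castRingHom ℝ) B k)

lemma map_intCast_mul (B R : Matrix (Fin D) (Fin D) ℤ) :
    (B * R).map (Int.cast : ℤ → ℝ) = B.map Int.cast * R.map Int.cast := by
  simpa using Matrix.map_mul (f := Int.castRingHom ℝ) (L := B) (M := R)

lemma phiAB_phiAB (A A' : Matrix (Fin D) (Fin D) ℝ) (B B' : Matrix (Fin D) (Fin D) ℤ)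
    (ξ : V D × L D → ℂ) :
    phiAB D A B (phiAB D A' B' ξ) = phiAB D (A' * A) (B' * B) ξ := by
  funext p
  simp only [phiAB, Matrix.mulVec_mulVec]

lemma phiAB_one (ξ : V D × L D → ℂ) : phiAB D 1 1 ξ = ξ := by
  funext p
  simp only [phiAB, Matrix.one_mulVec]

lemma isLinearMap_phiAB (A : Matrix (Fin D) (Fin D) ℝ) (B : Matrix (Fin D) (Fin D) ℤ) :
    IsLinearMap ℂ (phiAB D A B) :=
  ⟨fun _ _ => rfl, fun _ _ => rfl⟩

lemma bijective_phiAB {A : Matrix (Fin D) (Fin D) ℝ} (hA : IsUnit A.det)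
    {B : Matrix (Fin D) (Fin D) ℤ} (hB : IsUnit B.det) :
    Function.Bijective (phiAB D A B) := by
  refine Function.bijective_iff_has_inverse.2 ⟨phiAB D A⁻¹ B⁻¹, fun ξ => ?_, fun ξ => ?_⟩
  · rw [phiAB_phiAB, A.mul_nonsing_inv hA, B.mul_nonsing_inv hB, phiAB_one]
  · rw [phiAB_phiAB, A.nonsing_inv_mul hA, B.nonsing_inv_mul hB, phiAB_one]

lemma Phi_mulVec (Λ₀ Λ₁ A : Matrix (Fin D) (Fin D) ℝ) (B : Matrix (Fin D) (Fin D) ℤ)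
    (δ x : V D) (k : L D) :
    Phi D Λ₀ Λ₁ δ (A.mulVec x) (B.mulVec k) =
      Phi D (Λ₀ * A) (Λ₁ * B.map Int.cast) δ x k := by
  rw [Phi, Phi, cz_mulVec, Matrix.mulVec_mulVec, Matrix.mulVec_mulVec]

lemma phiAB_cact (hb : ℝ) (q : ℂ) (Λ₀ Λ₁ A E' : Matrix (Fin D) (Fin D) ℝ)
    (B R' : Matrix (Fin D) (Fin D) ℤ) (δ : V D) (a : Alg D) (ξ : V D × L D → ℂ) :
    phiAB D A B (cact D hb q Λ₀ Λ₁ (A * E') (B * R') δ a ξ) =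
      cact D hb q (Λ₀ * A) (Λ₁ * B.map Int.cast) E' R' δ a (phiAB D A B ξ) := by
  funext p
  unfold phiAB cact
  refine Finsupp.sum_congr fun n _ => ?_
  simp only [Phi_mulVec, Matrix.mulVec_add, Matrix.mulVec_mulVec]

end ShiftModule

open ShiftModule in
theorem stmt7_general (D : ℕ) (hb : ℝ) (q : ℂ)
    (F : Set (V D → ℂ))
    (Λ₀ Λ₁ E Λ₀' Λ₁' E' : Matrix (Fin D) (Fin D) ℝ)
    (R R' : Matrix (Fin D) (Fin D) ℤ) (δ : V D)
    (A : Matrix (Fin D) (Fin D) ℝ) (hA : IsUnit A.det)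
    (B : Matrix (Fin D) (Fin D) ℤ) (hB : IsUnit B.det)
    (h1 : Λ₀ * A = Λ₀') (h2 : A * E' = E)
    (h3 : Λ₁ * B.map (Int.cast : ℤ → ℝ) = Λ₁') (h4 : B * R' = R) :
    Λ₀ * E = Λ₀' * E' ∧
    Λ₁ * R.map (Int.cast : ℤ → ℝ) = Λ₁' * R'.map (Int.cast : ℤ → ℝ) ∧
    IsLinearMap ℂ (phiAB D A B) ∧
    Function.Bijective (phiAB D A B) ∧
    (∀ a : Alg D, (∀ k, a k ∈ F) → ∀ ξ : V D × L D → ℂ,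
      phiAB D A B (cact D hb q Λ₀ Λ₁ E R δ a ξ) =
        cact D hb q Λ₀' Λ₁' E' R' δ a (phiAB D A B ξ)) := by
  subst h1 h2 h3 h4
  refine ⟨?_, ?_, isLinearMap_phiAB A B, bijective_phiAB hA hB,
    fun a _ ξ => phiAB_cact hb q Λ₀ Λ₁ A E' B R' δ a ξ⟩
  · rw [Matrix.mul_assoc]
  · rw [map_intCast_mul, Matrix.mul_assoc]

/-- Lemma 3.4: if `A ∈ GL_D(ℝ)` and `B ∈ GL_D(ℤ)` satisfy `Λ₀A = Λ̃₀`, `AẼ = E`,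
`Λ₁B = Λ̃₁`, `BR̃ = R`, then `Λ₀E = Λ̃₀Ẽ`, `Λ₁R = Λ̃₁R̃`, and `φ(ξ)(x,k) = ξ(Ax,Bk)` is a
left module isomorphism `S_ħ^δ(Λ₀,E,Λ₁,R) ≃ S_ħ^δ(Λ̃₀,Ẽ,Λ̃₁,R̃)`. -/
theorem stmt7 (D : ℕ) (hb : ℝ) (hhb : 0 < hb) (q : ℂ) (hq : ‖q‖ = 1)
    (F : Set (V D → ℂ)) (hF : GoodF D hb F)
    (Λ₀ Λ₁ E Λ₀' Λ₁' E' : Matrix (Fin D) (Fin D) ℝ)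
    (R R' : Matrix (Fin D) (Fin D) ℤ) (δ : V D)
    (hcomp : Λ₀ * E + Λ₁ * R.map (Int.cast : ℤ → ℝ) = 1)
    (hcomp' : Λ₀' * E' + Λ₁' * R'.map (Int.cast : ℤ → ℝ) = 1)
    (A : Matrix (Fin D) (Fin D) ℝ) (hA : IsUnit A.det)
    (B : Matrix (Fin D) (Fin D) ℤ) (hB : IsUnit B.det)
    (h1 : Λ₀ * A = Λ₀') (h2 : A * E' = E)
    (h3 : Λ₁ * B.map (Int.cast : ℤ → ℝ) = Λ₁') (h4 : B * R' = R) :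
    Λ₀ * E = Λ₀' * E' ∧
    Λ₁ * R.map (Int.cast : ℤ → ℝ) = Λ₁' * R'.map (Int.cast : ℤ → ℝ) ∧
    IsLinearMap ℂ (phiAB D A B) ∧
    Function.Bijective (phiAB D A B) ∧
    (∀ a : Alg D, (∀ k, a k ∈ F) → ∀ ξ : V D × L D → ℂ,
      phiAB D A B (cact D hb q Λ₀ Λ₁ E R δ a ξ) =
        cact D hb q Λ₀' Λ₁' E' R' δ a (phiAB D A B ξ)) :=
  stmt7_general D hb q F Λ₀ Λ₁ E Λ₀' Λ₁' E' R R' δ A hA B hB h1 h2 h3 h4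
end
end

section
/- Let F separate points of R^D. The modules S_ħ(R,δ) and S_ħ(R̃,δ̃) over A^D_{ħ,q}(F) are isomorphic if and only if R R̃^{-1} ∈ GL_D(Z) and R(δ − δ̃) ∈ Z^D. -/
open scoped BigOperators

noncomputable section

abbrev DMod (D : ℕ) := (L D) →₀ ℂ

def Rinv {D : ℕ} (R : Matrix (Fin D) (Fin D) ℤ) : Matrix (Fin D) (Fin D) ℝ :=
  (R.map (Int.cast : ℤ → ℝ))⁻¹

def dact (D : ℕ) (hb : ℝ) (q : ℂ) (R : Matrix (Fin D) (Fin D) ℤ) (δ : V D)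
    (a : Alg D) (v : DMod D) : DMod D :=
  a.sum fun n f => v.sum fun k c =>
    Finsupp.single (k - R.mulVec n)
      ((q ^ (((Nr D ((Rinv R).mulVec (cz k) - cz n + δ) (cz n) : ℝ) : ℂ))) *
        f (hb • ((Rinv R).mulVec (cz k) - cz n + δ)) * c)

def DIso (D : ℕ) (hb : ℝ) (q : ℂ) (F : Set (V D → ℂ))
    (R : Matrix (Fin D) (Fin D) ℤ) (δ : V D)
    (R' : Matrix (Fin D) (Fin D) ℤ) (δ' : V D) : Prop :=
  ∃ φ : DMod D ≃ₗ[ℂ] DMod D,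
    ∀ a : Alg D, (∀ k, a k ∈ F) → ∀ v : DMod D,
      φ (dact D hb q R δ a v) = dact D hb q R' δ' a (φ v)


/-!
The basis vector `|k⟩ ∈ S_ħ(R,δ)` is an eigenvector of every multiplication operator `f U⁰`, with
eigenvalue `f (ħ (R⁻¹k + δ))`. An isomorphism commutes with these operators, so, `F` separating
points, each point `R⁻¹k + δ` is some `R̃⁻¹l + δ̃` and vice versa. Hence the affine map
`x ↦ R̃R⁻¹x + R̃(δ - δ̃)` maps `ℤ^D` into itself, which forces `R̃R⁻¹` and `R̃(δ - δ̃)` to be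
integral; with the roles exchanged, `RR̃⁻¹` is integral too, and the two integral matrices are
inverse to each other. Conversely, relabelling the basis along the lattice bijection
`k ↦ (RR̃⁻¹)⁻¹(k + R(δ - δ̃))` is an isomorphism.
-/

open Matrix

section IntegerMatrices

variable {D : ℕ}

lemma cz_zero : cz (0 : L D) = 0 := by ext; simp [cz]

lemma cz_sub (m n : L D) : cz (m - n) = cz m - cz n := by ext; simp [cz]

lemma cz_add (m n : L D) : cz (m + n) = cz m + cz n := by ext; simp [cz]

lemma cz_neg (n : L D) : cz (-n) = -cz n := by ext; simp [cz]

lemma cz_single (i : Fin D) : cz (Pi.single i 1) = Pi.single i 1 := by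
  ext j
  simp [cz, Pi.single_apply, apply_ite (Int.cast : ℤ → ℝ)]

lemma cz_mulVec (M : Matrix (Fin D) (Fin D) ℤ) (x : L D) :
    cz (M *ᵥ x) = M.map (Int.cast : ℤ → ℝ) *ᵥ cz x := by
  ext j
  simp [cz, mulVec, dotProduct]

lemma intCast_map_mul (M N : Matrix (Fin D) (Fin D) ℤ) :
    (M * N).map (Int.cast : ℤ → ℝ) = M.map Int.cast * N.map Int.cast :=
  Matrix.map_mul (f := Int.castRingHom ℝ)

lemma intCast_map_one : (1 : Matrix (Fin D) (Fin D) ℤ).map (Int.cast : ℤ → ℝ) = 1 :=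
  Matrix.map_one _ Int.cast_zero Int.cast_one

lemma intCast_map_injective :
    Function.Injective fun M : Matrix (Fin D) (Fin D) ℤ => M.map (Int.cast : ℤ → ℝ) :=
  map_injective Int.cast_injective

lemma isUnit_det_intCast_map {M : Matrix (Fin D) (Fin D) ℤ} (h : M.det ≠ 0) :
    IsUnit (M.map (Int.cast : ℤ → ℝ)).det := by
  rw [show (M.map (Int.cast : ℤ → ℝ)).det = (M.det : ℝ) from
    ((Int.castRingHom ℝ).map_det M).symm]
  exact isUnit_iff_ne_zero.mpr (by exact_mod_cast h)

/-- `b` is the image of `0`, and the `i`-th column of `A` the image of `eᵢ` minus that of `0`. -/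
lemma exists_intCast_map_eq_of_forall_exists_cz_eq (A : Matrix (Fin D) (Fin D) ℝ) (b : V D)
    (h : ∀ k : L D, ∃ l : L D, cz l = A *ᵥ cz k + b) :
    (∃ M : Matrix (Fin D) (Fin D) ℤ, M.map (Int.cast : ℤ → ℝ) = A) ∧ ∃ z : L D, cz z = b := by
  choose g hg using h
  have hg0 : cz (g 0) = b := by rw [hg, cz_zero, mulVec_zero, zero_add]
  refine ⟨⟨of fun j i => (g (Pi.single i 1) - g 0) j, ?_⟩, g 0, hg0⟩
  ext j i
  have hcol := congrFun (cz_sub (g (Pi.single i 1)) (g 0)) j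
  rw [hg, hg0, cz_single, mulVec_single_one, add_sub_cancel_right] at hcol
  simpa [cz] using hcol

end IntegerMatrices

section Action

variable {D : ℕ}

def eigenPoint (R : Matrix (Fin D) (Fin D) ℤ) (δ : V D) (k : L D) : V D :=
  Rinv R *ᵥ cz k + δ

variable {hb : ℝ} {q : ℂ} {F : Set (V D → ℂ)} {R R' : Matrix (Fin D) (Fin D) ℤ} {δ δ' : V D}

lemma dact_single_zero (f : V D → ℂ) (v : DMod D) :
    dact D hb q R δ (Finsupp.single 0 f) v =
      v.sum fun k c => Finsupp.single k (f (hb • eigenPoint R δ k) * c) := by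
  rw [dact, Finsupp.sum_single_index (by simp [Finsupp.sum])]
  refine Finsupp.sum_congr fun k _ => ?_
  simp [eigenPoint, cz_zero, Nr]

lemma dact_single_zero_apply (f : V D → ℂ) (v : DMod D) (l : L D) :
    dact D hb q R δ (Finsupp.single 0 f) v l = f (hb • eigenPoint R δ l) * v l := by
  classical
  rw [dact_single_zero, Finsupp.sum_apply, Finsupp.sum]
  simp only [Finsupp.single_apply]
  rw [Finset.sum_ite_eq' v.support l]
  split_ifs with hl
  · rfl
  · rw [Finsupp.notMem_support_iff.mp hl, mul_zero]

lemma DIso.symm (h : DIso D hb q F R δ R' δ') : DIso D hb q F R' δ' R δ := by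
  obtain ⟨φ, hφ⟩ := h
  refine ⟨φ.symm, fun a ha v => φ.injective ?_⟩
  rw [φ.apply_symm_apply, hφ a ha, φ.apply_symm_apply]

lemma DIso.exists_eigenPoint_eq (hhb : 0 < hb) (hF0 : (0 : V D → ℂ) ∈ F)
    (hsep : SeparatesPts D F) (h : DIso D hb q F R δ R' δ') (k : L D) :
    ∃ l, eigenPoint R δ k = eigenPoint R' δ' l := by
  -- `l` is a nonzero coordinate of `φ |k⟩`; read `φ (f U⁰ |k⟩) = f U⁰ (φ |k⟩)` at `l`.
  obtain ⟨φ, hφ⟩ := h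
  obtain ⟨l, hl⟩ := Finsupp.support_nonempty_iff.mpr <|
    (φ.map_ne_zero_iff.mpr (Finsupp.single_ne_zero.mpr one_ne_zero) :
      φ (Finsupp.single k 1) ≠ 0)
  refine ⟨l, smul_right_injective (V D) hhb.ne' ?_⟩
  by_contra hne
  obtain ⟨f, hf, hfne⟩ := hsep _ _ hne
  have ha : ∀ m, Finsupp.single (0 : L D) f m ∈ F := fun m => by
    rw [Finsupp.single_apply]; split_ifs <;> assumption
  have hcomm := congrArg (· l) (hφ _ ha (Finsupp.single k 1))
  have hdiag : dact D hb q R δ (Finsupp.single 0 f) (Finsupp.single k 1) =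
      f (hb • eigenPoint R δ k) • Finsupp.single k 1 := by
    rw [dact_single_zero, Finsupp.sum_single_index (by simp), Finsupp.smul_single, smul_eq_mul]
  simp only [hdiag, map_smul, Finsupp.smul_apply, smul_eq_mul, dact_single_zero_apply] at hcomm
  exact hfne (mul_right_cancel₀ (Finsupp.mem_support_iff.mp hl) hcomm)

end Action

section Lattice

variable {D : ℕ} {R R' : Matrix (Fin D) (Fin D) ℤ} {δ δ' : V D}

lemma exists_intCast_map_eq_of_forall_exists_eigenPoint_eq (hR' : R'.det ≠ 0)
    (h : ∀ k, ∃ l, eigenPoint R δ k = eigenPoint R' δ' l) :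
    (∃ M : Matrix (Fin D) (Fin D) ℤ, M.map (Int.cast : ℤ → ℝ) = R'.map Int.cast * Rinv R) ∧
      ∃ z : L D, cz z = R'.map (Int.cast : ℤ → ℝ) *ᵥ (δ - δ') := by
  refine exists_intCast_map_eq_of_forall_exists_cz_eq _ _ fun k => ?_
  obtain ⟨l, hl⟩ := h k
  refine ⟨l, ?_⟩
  have hl' : Rinv R' *ᵥ cz l = Rinv R *ᵥ cz k + (δ - δ') := by
    unfold eigenPoint at hl
    rw [add_sub, hl, add_sub_cancel_right]
  rw [← mulVec_mulVec, ← mulVec_add, ← hl', mulVec_mulVec, Rinv,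
    mul_nonsing_inv _ (isUnit_det_intCast_map hR'), one_mulVec]

lemma unimodular_of_eigenPoints_eq (hR : R.det ≠ 0) (hR' : R'.det ≠ 0)
    (h : ∀ k, ∃ l, eigenPoint R δ k = eigenPoint R' δ' l)
    (h' : ∀ l, ∃ k, eigenPoint R' δ' l = eigenPoint R δ k) :
    (∃ U : Matrix (Fin D) (Fin D) ℤ, IsUnit U.det ∧ R = U * R') ∧
      ∃ z : L D, R.map (Int.cast : ℤ → ℝ) *ᵥ (δ - δ') = cz z := by
  obtain ⟨⟨M, hM⟩, -⟩ := exists_intCast_map_eq_of_forall_exists_eigenPoint_eq hR' h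
  obtain ⟨⟨U, hU⟩, z, hz⟩ := exists_intCast_map_eq_of_forall_exists_eigenPoint_eq hR h'
  have hRinv : Rinv R * R.map Int.cast = 1 := nonsing_inv_mul _ (isUnit_det_intCast_map hR)
  have hRinv' : Rinv R' * R'.map Int.cast = 1 := nonsing_inv_mul _ (isUnit_det_intCast_map hR')
  have hUM : U * M = 1 := intCast_map_injective <| by
    simp only [intCast_map_mul, hU, hM, intCast_map_one]
    rw [Matrix.mul_assoc, ← Matrix.mul_assoc (Rinv R'), hRinv', Matrix.one_mul, Rinv,
      mul_nonsing_inv _ (isUnit_det_intCast_map hR)]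
  refine ⟨⟨U, isUnit_det_of_right_inverse hUM, intCast_map_injective ?_⟩, -z, ?_⟩
  · simp only [intCast_map_mul, hU]
    rw [Matrix.mul_assoc, hRinv', Matrix.mul_one]
  · rw [cz_neg, hz, ← mulVec_neg, neg_sub]

end Lattice

section Relabelling

variable {D : ℕ} {hb : ℝ} {q : ℂ} {F : Set (V D → ℂ)} {R R' : Matrix (Fin D) (Fin D) ℤ}
  {δ δ' : V D}

lemma dact_domLCongr (e : L D ≃ L D) (hshift : ∀ k n, e (k - R *ᵥ n) = e k - R' *ᵥ n)
    (hpt : ∀ k, eigenPoint R' δ' (e k) = eigenPoint R δ k) (a : Alg D) (v : DMod D) :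
    Finsupp.domLCongr (R := ℂ) e (dact D hb q R δ a v) =
      dact D hb q R' δ' a (Finsupp.domLCongr (R := ℂ) e v) := by
  have hpt' : ∀ k n, Rinv R' *ᵥ cz (e k) - cz n + δ' = Rinv R *ᵥ cz k - cz n + δ := by
    intro k n
    rw [sub_add_eq_add_sub, sub_add_eq_add_sub, ← eigenPoint, ← eigenPoint, hpt]
  simp only [dact, map_finsuppSum, Finsupp.mapDomain_single, hshift, Finsupp.domLCongr_apply,
    Finsupp.domCongr_apply, Finsupp.equivMapDomain_eq_mapDomain,
    Finsupp.sum_mapDomain_index_inj e.injective, hpt']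

def unitAffineEquiv (u : (Matrix (Fin D) (Fin D) ℤ)ˣ) (z : L D) : L D ≃ L D where
  toFun k := ↑u⁻¹ *ᵥ (k + z)
  invFun l := ↑u *ᵥ l - z
  left_inv k := by simp [mulVec_mulVec]
  right_inv l := by simp [mulVec_mulVec]

lemma DIso.of_unimodular (hR : R.det ≠ 0) {U : Matrix (Fin D) (Fin D) ℤ} (hU : IsUnit U.det)
    (hRU : R = U * R') {z : L D} (hz : R.map (Int.cast : ℤ → ℝ) *ᵥ (δ - δ') = cz z) :
    DIso D hb q F R δ R' δ' := by
  obtain ⟨u, rfl⟩ := (isUnit_iff_isUnit_det U).mpr hU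
  refine ⟨Finsupp.domLCongr (R := ℂ) (unitAffineEquiv u z),
    fun a _ v => dact_domLCongr _ ?_ ?_ a v⟩
  · intro k n
    have hsplit : k - R *ᵥ n + z = k + z - ↑u *ᵥ (R' *ᵥ n) := by
      rw [hRU, mulVec_mulVec]; abel
    simp only [unitAffineEquiv, Equiv.coe_fn_mk, hsplit, mulVec_sub, mulVec_mulVec,
      ← Matrix.mul_assoc, u.inv_mul, Matrix.one_mul]
  · intro k
    have hUinv : ((↑u : Matrix (Fin D) (Fin D) ℤ).map (Int.cast : ℤ → ℝ))⁻¹ =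
        (↑u⁻¹ : Matrix (Fin D) (Fin D) ℤ).map Int.cast :=
      inv_eq_right_inv (by rw [← intCast_map_mul, u.mul_inv, intCast_map_one])
    have hRinv : Rinv R' * (↑u⁻¹ : Matrix (Fin D) (Fin D) ℤ).map Int.cast = Rinv R := by
      rw [Rinv, Rinv, hRU, intCast_map_mul, Matrix.mul_inv_rev, hUinv]
    have hzδ : Rinv R *ᵥ cz z = δ - δ' := by
      rw [← hz, mulVec_mulVec, Rinv, nonsing_inv_mul _ (isUnit_det_intCast_map hR), one_mulVec]
    simp only [eigenPoint, unitAffineEquiv, Equiv.coe_fn_mk, cz_mulVec, cz_add, mulVec_mulVec,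
      hRinv, mulVec_add, hzδ]
    abel

end Relabelling

theorem stmt8_general (D : ℕ) (hb : ℝ) (hhb : 0 < hb) (q : ℂ)
    (F : Set (V D → ℂ)) (hF : GoodF D hb F) (hsep : SeparatesPts D F)
    (R R' : Matrix (Fin D) (Fin D) ℤ) (hR : R.det ≠ 0) (hR' : R'.det ≠ 0)
    (δ δ' : V D) :
    DIso D hb q F R δ R' δ' ↔
      ((∃ U : Matrix (Fin D) (Fin D) ℤ, IsUnit U.det ∧ R = U * R') ∧
        ∃ z : L D, (R.map (Int.cast : ℤ → ℝ)).mulVec (δ - δ') = cz z) := by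
  constructor
  · intro h
    exact unimodular_of_eigenPoints_eq hR hR' (h.exists_eigenPoint_eq hhb hF.zero_mem hsep)
      (h.symm.exists_eigenPoint_eq hhb hF.zero_mem hsep)
  · rintro ⟨⟨U, hU, hRU⟩, z, hz⟩
    exact DIso.of_unimodular hR hU hRU hz

/-- Proposition 3.9: if `F` separates points, then `S_ħ(R,δ) ≅ S_ħ(R̃,δ̃)` if and only if
`R R̃⁻¹ ∈ GL_D(ℤ)` (i.e. `R = U R̃` for some `U ∈ GL_D(ℤ)`) and `R(δ−δ̃) ∈ ℤ^D`. -/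
theorem stmt8 (D : ℕ) (hb : ℝ) (hhb : 0 < hb) (q : ℂ) (hq : ‖q‖ = 1)
    (F : Set (V D → ℂ)) (hF : GoodF D hb F) (hsep : SeparatesPts D F)
    (R R' : Matrix (Fin D) (Fin D) ℤ) (hR : R.det ≠ 0) (hR' : R'.det ≠ 0)
    (δ δ' : V D) :
    DIso D hb q F R δ R' δ' ↔
      ((∃ U : Matrix (Fin D) (Fin D) ℤ, IsUnit U.det ∧ R = U * R') ∧
        ∃ z : L D, (R.map (Int.cast : ℤ → ℝ)).mulVec (δ - δ') = cz z) :=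
  stmt8_general D hb hhb q F hF hsep R R' hR hR' δ δ'
end
end

section
/- In the one-dimensional shift algebra, if f((M−1/2+δ)ħ) = 0 and f((N+1/2+δ)ħ) = 0 for integers M < N, while f((n+1/2+δ)ħ) ≠ 0 for all integers M ≤ n ≤ N, then the cyclic module generated by |M⟩ (equivalently by |N⟩) under the subalgebra generated by A_+ = f(u − ħ/2)U^{-1} and A_− = f(u + ħ/2)U equals the (N − M + 1)-dimensional span of {|n⟩ : M ≤ n ≤ N}. -/
/-!
Since `f` vanishes at `(M-1/2+δ)ħ` and `(N+1/2+δ)ħ`, the span of `|M⟩, …, |N⟩` is stable under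
`A_+` and `A_-`, so it contains the modules generated by `|M⟩` and by `|N⟩`. Conversely, `f` does
not vanish in between, so `A_+` climbs from `|M⟩` and `A_-` descends from `|N⟩` through every
`|n⟩` with `M ≤ n ≤ N`, each time up to a nonzero scalar.
-/

open scoped BigOperators

noncomputable section

/-- The action of `A_+ = f(u − ħ/2)U⁻¹` on the module `S_ħ(1,δ)` with basis
`{|n⟩}_{n∈ℤ}`: `A_+|n⟩ = f((n+1/2+δ)ħ)|n+1⟩`. -/
def aplus (hb δ : ℝ) (f : ℝ → ℂ) (v : ℤ →₀ ℂ) : ℤ →₀ ℂ :=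
  v.sum fun n c => Finsupp.single (n + 1) (f (((n : ℝ) + 1/2 + δ) * hb) * c)

/-- The action of `A_− = f(u + ħ/2)U`: `A_−|n⟩ = f((n−1/2+δ)ħ)|n−1⟩`. -/
def aminus (hb δ : ℝ) (f : ℝ → ℂ) (v : ℤ →₀ ℂ) : ℤ →₀ ℂ :=
  v.sum fun n c => Finsupp.single (n - 1) (f (((n : ℝ) - 1/2 + δ) * hb) * c)

/-- The `A_ħ(F,f)`-submodule generated by `v`: the smallest subspace containing `v`
and closed under `A_+` and `A_−`. -/
def genMod (hb δ : ℝ) (f : ℝ → ℂ) (v : ℤ →₀ ℂ) : Submodule ℂ (ℤ →₀ ℂ) :=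
  sInf {S : Submodule ℂ (ℤ →₀ ℂ) |
    v ∈ S ∧ (∀ w ∈ S, aplus hb δ f w ∈ S) ∧ (∀ w ∈ S, aminus hb δ f w ∈ S)}

section ShiftModule

variable {hb δ : ℝ} {f : ℝ → ℂ}

theorem aplus_single (n : ℤ) (c : ℂ) :
    aplus hb δ f (Finsupp.single n c) =
      Finsupp.single (n + 1) (f (((n : ℝ) + 1/2 + δ) * hb) * c) :=
  Finsupp.sum_single_index (by simp)

theorem aminus_single (n : ℤ) (c : ℂ) :
    aminus hb δ f (Finsupp.single n c) =
      Finsupp.single (n - 1) (f (((n : ℝ) - 1/2 + δ) * hb) * c) :=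
  Finsupp.sum_single_index (by simp)

theorem mem_genMod_self (v : ℤ →₀ ℂ) : v ∈ genMod hb δ f v :=
  Submodule.mem_sInf.2 fun _ hS => hS.1

theorem aplus_mem_genMod {v w : ℤ →₀ ℂ} (hw : w ∈ genMod hb δ f v) :
    aplus hb δ f w ∈ genMod hb δ f v :=
  Submodule.mem_sInf.2 fun S hS => hS.2.1 w (Submodule.mem_sInf.1 hw S hS)

theorem aminus_mem_genMod {v w : ℤ →₀ ℂ} (hw : w ∈ genMod hb δ f v) :
    aminus hb δ f w ∈ genMod hb δ f v :=
  Submodule.mem_sInf.2 fun S hS => hS.2.2 w (Submodule.mem_sInf.1 hw S hS)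

theorem genMod_le {v : ℤ →₀ ℂ} {S : Submodule ℂ (ℤ →₀ ℂ)} (hv : v ∈ S)
    (hplus : ∀ w ∈ S, aplus hb δ f w ∈ S) (hminus : ∀ w ∈ S, aminus hb δ f w ∈ S) :
    genMod hb δ f v ≤ S :=
  sInf_le ⟨hv, hplus, hminus⟩

theorem single_mem_genMod_iff_of_ne_zero {v : ℤ →₀ ℂ} {n : ℤ} {c : ℂ} (hc : c ≠ 0) :
    Finsupp.single n c ∈ genMod hb δ f v ↔ Finsupp.single n 1 ∈ genMod hb δ f v := by
  rw [← mul_one c, ← smul_eq_mul, ← Finsupp.smul_single, Submodule.smul_mem_iff _ hc]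

theorem single_add_one_mem_genMod {v : ℤ →₀ ℂ} {n : ℤ}
    (hn : f (((n : ℝ) + 1/2 + δ) * hb) ≠ 0) (h : Finsupp.single n 1 ∈ genMod hb δ f v) :
    Finsupp.single (n + 1) 1 ∈ genMod hb δ f v := by
  have := aplus_mem_genMod h
  rwa [aplus_single, mul_one, single_mem_genMod_iff_of_ne_zero hn] at this

theorem single_sub_one_mem_genMod {v : ℤ →₀ ℂ} {n : ℤ}
    (hn : f (((n : ℝ) - 1/2 + δ) * hb) ≠ 0) (h : Finsupp.single n 1 ∈ genMod hb δ f v) :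
    Finsupp.single (n - 1) 1 ∈ genMod hb δ f v := by
  have := aminus_mem_genMod h
  rwa [aminus_single, mul_one, single_mem_genMod_iff_of_ne_zero hn] at this

theorem single_mem_genMod_single_of_le {M N n : ℤ}
    (hnz : ∀ k : ℤ, M ≤ k → k < N → f (((k : ℝ) + 1/2 + δ) * hb) ≠ 0)
    (hMn : M ≤ n) (hnN : n ≤ N) :
    Finsupp.single n 1 ∈ genMod hb δ f (Finsupp.single M 1) := by
  induction n, hMn using Int.leInduction with
  | base => exact mem_genMod_self _
  | succ k hMk ih =>
    exact single_add_one_mem_genMod (hnz k hMk (by omega)) (ih (by omega))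

theorem single_mem_genMod_single_of_ge {M N n : ℤ}
    (hnz : ∀ k : ℤ, M ≤ k → k < N → f (((k : ℝ) + 1/2 + δ) * hb) ≠ 0)
    (hMn : M ≤ n) (hnN : n ≤ N) :
    Finsupp.single n 1 ∈ genMod hb δ f (Finsupp.single N 1) := by
  induction n, hnN using Int.leInductionDown with
  | base => exact mem_genMod_self _
  | pred k hkN ih =>
    refine single_sub_one_mem_genMod ?_ (ih (by omega))
    convert hnz (k - 1) hMn (by omega) using 3
    push_cast
    ring

theorem supported_Icc_le_genMod {M N : ℤ} {v : ℤ →₀ ℂ}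
    (h : ∀ n, M ≤ n → n ≤ N → Finsupp.single n 1 ∈ genMod hb δ f v) :
    Finsupp.supported ℂ ℂ (Set.Icc M N) ≤ genMod hb δ f v := by
  rw [Finsupp.supported_eq_span_single, Submodule.span_le]
  rintro _ ⟨n, ⟨hMn, hnN⟩, rfl⟩
  exact h n hMn hnN

theorem aplus_mem_supported_Icc {M N : ℤ} (hN : f (((N : ℝ) + 1/2 + δ) * hb) = 0)
    {w : ℤ →₀ ℂ} (hw : w ∈ Finsupp.supported ℂ ℂ (Set.Icc M N)) :
    aplus hb δ f w ∈ Finsupp.supported ℂ ℂ (Set.Icc M N) := by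
  refine Submodule.finsuppSum_mem _ _ _ _ fun n hn => ?_
  obtain ⟨hMn, hnN⟩ := hw (Finsupp.mem_support_iff.2 hn)
  rcases hnN.eq_or_lt with rfl | hlt
  · rw [hN, zero_mul, Finsupp.single_zero]
    exact Submodule.zero_mem _
  · exact Finsupp.single_mem_supported ℂ _ ⟨by omega, by omega⟩

theorem aminus_mem_supported_Icc {M N : ℤ} (hM : f (((M : ℝ) - 1/2 + δ) * hb) = 0)
    {w : ℤ →₀ ℂ} (hw : w ∈ Finsupp.supported ℂ ℂ (Set.Icc M N)) :
    aminus hb δ f w ∈ Finsupp.supported ℂ ℂ (Set.Icc M N) := by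
  refine Submodule.finsuppSum_mem _ _ _ _ fun n hn => ?_
  obtain ⟨hMn, hnN⟩ := hw (Finsupp.mem_support_iff.2 hn)
  rcases hMn.eq_or_lt with rfl | hlt
  · rw [hM, zero_mul, Finsupp.single_zero]
    exact Submodule.zero_mem _
  · exact Finsupp.single_mem_supported ℂ _ ⟨by omega, by omega⟩

theorem genMod_single_le_supported_Icc {M N n : ℤ} (hM : f (((M : ℝ) - 1/2 + δ) * hb) = 0)
    (hN : f (((N : ℝ) + 1/2 + δ) * hb) = 0) (hMn : M ≤ n) (hnN : n ≤ N) :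
    genMod hb δ f (Finsupp.single n 1) ≤ Finsupp.supported ℂ ℂ (Set.Icc M N) :=
  genMod_le (Finsupp.single_mem_supported ℂ _ ⟨hMn, hnN⟩)
    (fun _ => aplus_mem_supported_Icc hN) (fun _ => aminus_mem_supported_Icc hM)

end ShiftModule

theorem span_single_one_Icc_eq_supported (M N : ℤ) :
    Submodule.span ℂ {w : ℤ →₀ ℂ | ∃ n : ℤ, M ≤ n ∧ n ≤ N ∧ w = Finsupp.single n 1} =
      Finsupp.supported ℂ ℂ (Set.Icc M N) := by
  rw [Finsupp.supported_eq_span_single]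
  congr 1
  ext w
  simp only [Set.mem_ofPred_eq, Set.mem_image, Set.mem_Icc, and_assoc, eq_comm]

theorem finrank_supported_Icc (M N : ℤ) :
    Module.finrank ℂ (Finsupp.supported ℂ ℂ (Set.Icc M N)) = (N - M + 1).toNat := by
  rw [(Finsupp.supportedEquivFinsupp (Set.Icc M N)).finrank_eq, Module.finrank_finsupp_self,
    Fintype.card_Icc, Int.card_Icc, sub_add_eq_add_sub]

theorem stmt18_general (hb δ : ℝ) (f : ℝ → ℂ) (M N : ℤ) (hMN : M < N)
    (hM : f (((M : ℝ) - 1/2 + δ) * hb) = 0)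
    (hN : f (((N : ℝ) + 1/2 + δ) * hb) = 0)
    (hnz : ∀ n : ℤ, M ≤ n → n < N → f (((n : ℝ) + 1/2 + δ) * hb) ≠ 0) :
    genMod hb δ f (Finsupp.single M 1) = genMod hb δ f (Finsupp.single N 1) ∧
    genMod hb δ f (Finsupp.single M 1) =
      Submodule.span ℂ {w : ℤ →₀ ℂ | ∃ n : ℤ, M ≤ n ∧ n ≤ N ∧ w = Finsupp.single n 1} ∧
    Module.finrank ℂ (genMod hb δ f (Finsupp.single M 1)) = (N - M + 1).toNat := by
  have hMeq : genMod hb δ f (Finsupp.single M 1) = Finsupp.supported ℂ ℂ (Set.Icc M N) :=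
    (genMod_single_le_supported_Icc hM hN le_rfl hMN.le).antisymm
      (supported_Icc_le_genMod fun _ => single_mem_genMod_single_of_le hnz)
  have hNeq : genMod hb δ f (Finsupp.single N 1) = Finsupp.supported ℂ ℂ (Set.Icc M N) :=
    (genMod_single_le_supported_Icc hM hN hMN.le le_rfl).antisymm
      (supported_Icc_le_genMod fun _ => single_mem_genMod_single_of_ge hnz)
  rw [hMeq, hNeq, span_single_one_Icc_eq_supported, finrank_supported_Icc]
  exact ⟨rfl, rfl, rfl⟩

/-- Proposition 4.3 (3): if `f((M−1/2+δ)ħ) = 0`, `f((N+1/2+δ)ħ) = 0` for integers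
`M < N`, while `f((n+1/2+δ)ħ) ≠ 0` for `M ≤ n < N`, then the cyclic module generated by
`|M⟩` (equivalently by `|N⟩`) under the subalgebra generated by `A_+` and `A_−` equals
the `(N−M+1)`-dimensional span of `{|n⟩ : M ≤ n ≤ N}`. -/
theorem stmt18 (hb δ : ℝ) (hhb : 0 < hb) (f : ℝ → ℂ) (M N : ℤ) (hMN : M < N)
    (hM : f (((M : ℝ) - 1/2 + δ) * hb) = 0)
    (hN : f (((N : ℝ) + 1/2 + δ) * hb) = 0)
    (hnz : ∀ n : ℤ, M ≤ n → n < N → f (((n : ℝ) + 1/2 + δ) * hb) ≠ 0) :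
    genMod hb δ f (Finsupp.single M 1) = genMod hb δ f (Finsupp.single N 1) ∧
    genMod hb δ f (Finsupp.single M 1) =
      Submodule.span ℂ {w : ℤ →₀ ℂ | ∃ n : ℤ, M ≤ n ∧ n ≤ N ∧ w = Finsupp.single n 1} ∧
    Module.finrank ℂ (genMod hb δ f (Finsupp.single M 1)) = (N - M + 1).toNat :=
  stmt18_general hb δ f M N hMN hM hN hnz
end
end
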